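/- For every d ≥ 1, p ≥ 1 and q > 0 with pq > 2d there exists a constant C (depending only on d, p, q) such that for every continuous function f : ℝ^d → ℝ, every open unit ball B_1(x) ⊂ ℝ^d and all s, t ∈ B_1(x): |f(t) − f(s)| ≤ C |t − s|^{q − 2d/p} ( ∫_{B_1(x)} ∫_{B_1(x)} (|f(u) − f(v)| / |u − v|^q)^p du dv )^{1/p}. -/

import Mathlib

/-!
If every point of `A` lies within `D` of every point of `B`, Jensen's inequality on `A × B` gives
`|⨍_A f - ⨍_B f| ≤ D ^ q * ((μ A * μ B)⁻¹ * ∫∫_{A × B} (|f u - f v| / |u - v| ^ q) ^ p) ^ (1 / p)`,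
which for two balls of radius comparable to `D` is a constant times `D ^ (q - 2n/p)` times the
`p`-th root of the energy. Along the balls of radii `ε / 2 ^ k` centred on the segment from `s`
to `x`, these bounds form a geometric series (as `q - 2n/p > 0`) and the averages tend to `f s`.
With `ε = |t - s| / 2`, one more comparison joins the first balls of the chains at `s` and `t`.
-/

open MeasureTheory ENNReal Metric Filter Topology

noncomputable section

section Averages

variable {α F : Type*} [MeasurableSpace α] [NormedAddCommGroup F] [NormedSpace ℝ F]

theorem laverage_le_laverage_rpow_one_div (μ : Measure α) {p : ℝ} (hp : 1 ≤ p)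
    {g : α → ℝ≥0∞} (hg : AEMeasurable g μ) :
    ⨍⁻ x, g x ∂μ ≤ (⨍⁻ x, g x ^ p ∂μ) ^ (1 / p) := by
  set ν := (μ Set.univ)⁻¹ • μ
  have hν : ν Set.univ ≤ 1 := ENNReal.inv_mul_le_one _
  have holder := eLpNorm'_le_eLpNorm'_mul_rpow_measure_univ one_pos hp
    (hg.smul_measure (μ Set.univ)⁻¹).aestronglyMeasurable
  simp only [eLpNorm'_eq_lintegral_enorm, enorm_eq_self, rpow_one, div_one] at holder
  calc ⨍⁻ x, g x ∂μ ≤ (⨍⁻ x, g x ^ p ∂μ) ^ (1 / p) * ν Set.univ ^ (1 - 1 / p) := holder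
    _ ≤ (⨍⁻ x, g x ^ p ∂μ) ^ (1 / p) := by
      refine mul_le_of_le_one_right' (rpow_le_one hν ?_)
      rw [sub_nonneg, div_le_one (by linarith)]
      exact hp

theorem enorm_average_le_laverage_enorm (μ : Measure α) (g : α → F) :
    ‖⨍ x, g x ∂μ‖ₑ ≤ ⨍⁻ x, ‖g x‖ₑ ∂μ :=
  enorm_integral_le_lintegral_enorm _

theorem average_sub_average_eq_average_prod (μ ν : Measure α) [IsFiniteMeasure μ]
    [IsFiniteMeasure ν] [NeZero μ] [NeZero ν] {f : α → F} (hμ : Integrable f μ)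
    (hν : Integrable f ν) :
    ⨍ x, f x ∂μ - ⨍ y, f y ∂ν = ⨍ z, (f z.1 - f z.2) ∂μ.prod ν := by
  have hμ0 : μ.real Set.univ ≠ 0 := (measureReal_univ_pos).ne'
  have hν0 : ν.real Set.univ ≠ 0 := (measureReal_univ_pos).ne'
  rw [average_eq, average_eq, average_eq, integral_sub (hμ.comp_fst ν) (hν.comp_snd μ),
    integral_fun_fst, integral_fun_snd, ← Set.univ_prod_univ, measureReal_prod_prod,
    smul_sub, smul_smul, smul_smul]
  congr 2 <;> field_simp

theorem edist_average_le_laverage_edist (μ ν : Measure α) [IsFiniteMeasure μ]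
    [IsFiniteMeasure ν] [NeZero μ] [NeZero ν] {f : α → F} (hμ : Integrable f μ)
    (hν : Integrable f ν) :
    edist (⨍ x, f x ∂μ) (⨍ y, f y ∂ν) ≤ ⨍⁻ z, edist (f z.1) (f z.2) ∂μ.prod ν := by
  simp only [edist_eq_enorm_sub]
  rw [average_sub_average_eq_average_prod μ ν hμ hν]
  exact enorm_average_le_laverage_enorm _ _

theorem ContinuousAt.tendsto_setAverage [CompleteSpace F] [TopologicalSpace α] {μ : Measure α}
    {f : α → F} {a : α} (hf : ContinuousAt f a) {ι : Type*} {l : Filter ι} {A : ι → Set α}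
    (hA : Tendsto A l (𝓝 a).smallSets) (h0 : ∀ i, μ (A i) ≠ 0) (htop : ∀ i, μ (A i) ≠ ∞)
    (hmeas : ∀ i, MeasurableSet (A i)) (hint : ∀ i, IntegrableOn f (A i) μ) :
    Tendsto (fun i ↦ ⨍ y in A i, f y ∂μ) l (𝓝 (f a)) := by
  refine (nhds_basis_closedBall.tendsto_right_iff).2 fun ε hε ↦ ?_
  have hnear : ∀ᶠ y in 𝓝 a, f y ∈ closedBall (f a) ε := hf (closedBall_mem_nhds _ hε)
  filter_upwards [hA.eventually (eventually_smallSets_forall.2 hnear)] with i hi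
  exact (convex_closedBall _ _).set_average_mem isClosed_closedBall (h0 i) (htop i)
    ((ae_restrict_mem (hmeas i)).mono hi) (hint i)

end Averages

section Energy

variable {X : Type*} [MetricSpace X] [MeasurableSpace X]

def grrEnergy (μ : Measure X) (f : X → ℝ) (p q : ℝ) (S : Set X) : ℝ≥0∞ :=
  ∫⁻ uv in S ×ˢ S, ENNReal.ofReal ((|f uv.1 - f uv.2| / dist uv.1 uv.2 ^ q) ^ p) ∂μ.prod μ

variable [BorelSpace X] [SecondCountableTopology X] {μ : Measure X} [SFinite μ]

theorem edist_setAverage_le_grrEnergy {f : X → ℝ} (hf : Continuous f) {p q D : ℝ}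
    (hp : 1 ≤ p) (hq : 0 ≤ q) {S A B : Set X} (hAS : A ⊆ S) (hBS : B ⊆ S)
    (hA : MeasurableSet A) (hB : MeasurableSet B) (hA0 : μ A ≠ 0) (hAtop : μ A ≠ ∞)
    (hB0 : μ B ≠ 0) (hBtop : μ B ≠ ∞) (hfA : IntegrableOn f A μ) (hfB : IntegrableOn f B μ)
    (hD : ∀ u ∈ A, ∀ v ∈ B, dist u v ≤ D) :
    edist (⨍ u in A, f u ∂μ) (⨍ v in B, f v ∂μ)
      ≤ ENNReal.ofReal (D ^ q) * ((μ A * μ B)⁻¹ * grrEnergy μ f p q S) ^ (1 / p) := by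
  have : IsFiniteMeasure (μ.restrict A) := isFiniteMeasure_restrict.2 hAtop
  have : IsFiniteMeasure (μ.restrict B) := isFiniteMeasure_restrict.2 hBtop
  have : NeZero (μ.restrict A) := ⟨by simpa [Measure.restrict_eq_zero] using hA0⟩
  have : NeZero (μ.restrict B) := ⟨by simpa [Measure.restrict_eq_zero] using hB0⟩
  set g : X × X → ℝ≥0∞ := fun z ↦ ENNReal.ofReal (|f z.1 - f z.2| / dist z.1 z.2 ^ q)
  have hg : Measurable g := by
    refine ENNReal.measurable_ofReal.comp (Measurable.div ?_ ?_)
    · exact (hf.comp continuous_fst).sub (hf.comp continuous_snd) |>.abs.measurable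
    · exact (measurable_fst.dist measurable_snd).pow_const q
  set ν := (μ.restrict A).prod (μ.restrict B)
  have hν : ν = (μ.prod μ).restrict (A ×ˢ B) := Measure.prod_restrict A B
  have hpoint : ∀ᵐ z ∂ν, edist (f z.1) (f z.2) ≤ ENNReal.ofReal (D ^ q) * g z := by
    rw [hν]
    filter_upwards [ae_restrict_mem (hA.prod hB)] with z ⟨hu, hv⟩
    have hD0 : 0 ≤ D := dist_nonneg.trans (hD _ hu _ hv)
    rw [edist_dist, Real.dist_eq, ← ofReal_mul (by positivity)]
    refine ofReal_le_ofReal ?_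
    rcases eq_or_ne z.1 z.2 with h | h
    · simp [h]
    have hpos : 0 < dist z.1 z.2 ^ q := Real.rpow_pos_of_pos (dist_pos.2 h) q
    calc |f z.1 - f z.2| = dist z.1 z.2 ^ q * (|f z.1 - f z.2| / dist z.1 z.2 ^ q) := by
          field_simp
      _ ≤ D ^ q * (|f z.1 - f z.2| / dist z.1 z.2 ^ q) := by
          gcongr
          exact hD _ hu _ hv
  have hgp : ⨍⁻ z, g z ^ p ∂ν ≤ (μ A * μ B)⁻¹ * grrEnergy μ f p q S := by
    rw [laverage_eq, hν, Measure.restrict_apply_univ, Measure.prod_prod, ENNReal.div_eq_inv_mul]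
    gcongr
    calc ∫⁻ z in A ×ˢ B, g z ^ p ∂μ.prod μ ≤ ∫⁻ z in S ×ˢ S, g z ^ p ∂μ.prod μ :=
          lintegral_mono_set (Set.prod_mono hAS hBS)
      _ = grrEnergy μ f p q S :=
          lintegral_congr fun z ↦ ofReal_rpow_of_nonneg (by positivity) (by linarith)
  calc edist (⨍ u in A, f u ∂μ) (⨍ v in B, f v ∂μ)
      ≤ ⨍⁻ z, edist (f z.1) (f z.2) ∂ν := edist_average_le_laverage_edist _ _ hfA hfB
    _ ≤ ⨍⁻ z, ENNReal.ofReal (D ^ q) * g z ∂ν := laverage_mono_ae hpoint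
    _ = ENNReal.ofReal (D ^ q) * ⨍⁻ z, g z ∂ν := by
      simp only [laverage_eq', lintegral_const_mul' _ _ ofReal_ne_top]
    _ ≤ ENNReal.ofReal (D ^ q) * ((μ A * μ B)⁻¹ * grrEnergy μ f p q S) ^ (1 / p) := by
      gcongr
      refine (laverage_le_laverage_rpow_one_div ν hp hg.aemeasurable).trans ?_
      gcongr

end Energy

section Geometry

variable {E : Type*} [NormedAddCommGroup E] [NormedSpace ℝ E]

theorem ball_lineMap_subset_ball {x s : E} (hs : s ∈ ball x 1) {θ : ℝ} (hθ : θ ≤ 1) :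
    ball (AffineMap.lineMap s x θ) θ ⊆ ball x 1 := by
  intro y hy
  rw [mem_ball] at hs hy ⊢
  have hθ0 : 0 ≤ θ := dist_nonneg.trans hy.le
  calc dist y x ≤ dist y (AffineMap.lineMap s x θ) + dist (AffineMap.lineMap s x θ) x :=
        dist_triangle _ _ _
    _ < θ + (1 - θ) * 1 := by
        rw [dist_lineMap_right, Real.norm_of_nonneg (by linarith)]
        exact add_lt_add_of_lt_of_le hy (mul_le_mul_of_nonneg_left hs.le (by linarith))
    _ = 1 := by ring

theorem tendsto_ball_lineMap_smallSets (s x : E) {ι : Type*} {l : Filter ι} {θ : ι → ℝ}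
    (hθ : Tendsto θ l (𝓝 0)) :
    Tendsto (fun i ↦ ball (AffineMap.lineMap s x (θ i)) (θ i)) l (𝓝 s).smallSets := by
  refine nhds_basis_ball.smallSets.tendsto_right_iff.2 fun ρ hρ ↦ ?_
  have hsmall : Tendsto (fun i ↦ ‖θ i‖ * (1 + dist s x)) l (𝓝 0) := by
    simpa using hθ.norm.mul_const (1 + dist s x)
  filter_upwards [hsmall.eventually (gt_mem_nhds hρ)] with i hi
  refine ball_subset_ball' ?_
  rw [dist_lineMap_left]
  nlinarith [Real.le_norm_self (θ i)]

end Geometry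

section HaarBalls

variable {E : Type*} [NormedAddCommGroup E] [NormedSpace ℝ E] [FiniteDimensional ℝ E]
  [MeasurableSpace E] {μ : Measure E} [μ.IsAddHaarMeasure]

-- `μ (ball c (D / 4)) ^ (-2) = D ^ (-2n) * μ.real (ball 0 4⁻¹) ^ (-2)`
variable (μ) in
def grrBallConst (p : ℝ) : ℝ := ((μ.real (ball 0 4⁻¹) ^ 2)⁻¹) ^ (1 / p)

-- two chains of balls, each a geometric series, and the bridge between them
variable (μ) in
def grrConst (p q : ℝ) : ℝ :=
  grrBallConst μ p * (2 * (1 - (1 / 2) ^ (q - 2 * Module.finrank ℝ E / p))⁻¹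
    + 2 ^ (q - 2 * Module.finrank ℝ E / p))

theorem measureReal_ball_quarter_pos : 0 < μ.real (ball 0 4⁻¹) :=
  toReal_pos (measure_ball_pos μ 0 (by norm_num)).ne' measure_ball_lt_top.ne

theorem grrBallConst_mul_rpow {p q D : ℝ} (hD : 0 < D) :
    grrBallConst μ p * D ^ (q - 2 * Module.finrank ℝ E / p)
      = D ^ q * ((D ^ Module.finrank ℝ E * μ.real (ball 0 4⁻¹)) ^ 2)⁻¹ ^ (1 / p) := by
  set n := Module.finrank ℝ E
  have := measureReal_ball_quarter_pos (μ := μ)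
  have h : ((D ^ n * μ.real (ball 0 4⁻¹)) ^ 2)⁻¹
      = (μ.real (ball 0 4⁻¹) ^ 2)⁻¹ * D ^ (-(2 * n : ℝ)) := by
    rw [Real.rpow_neg hD.le, show (2 * n : ℝ) = ((n * 2 : ℕ) : ℝ) by push_cast; ring,
      Real.rpow_natCast, pow_mul, mul_pow, mul_inv, mul_comm]
  rw [h, Real.mul_rpow (by positivity) (by positivity), ← Real.rpow_mul hD.le, mul_left_comm,
    ← Real.rpow_add hD]
  congr 2
  ring

variable (μ) in
theorem grrBallConst_pos (p : ℝ) : 0 < grrBallConst μ p := by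
  have := measureReal_ball_quarter_pos (μ := μ)
  unfold grrBallConst
  positivity

theorem grrConst_pos {p q : ℝ} (hα : 0 < q - 2 * Module.finrank ℝ E / p) :
    0 < grrConst μ p q := by
  have := grrBallConst_pos μ p
  have hG : 0 < 1 - (1 / 2 : ℝ) ^ (q - 2 * Module.finrank ℝ E / p) :=
    sub_pos.2 (Real.rpow_lt_one (by norm_num) (by norm_num) hα)
  unfold grrConst
  positivity

variable [BorelSpace E]

theorem Continuous.integrableOn_ball {F : Type*} [NormedAddCommGroup F] {f : E → F}
    (hf : Continuous f) (a : E) (r : ℝ) : IntegrableOn f (ball a r) μ :=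
  (hf.continuousOn.integrableOn_compact (isCompact_closedBall a r)).mono_set ball_subset_closedBall

theorem ofReal_pow_mul_measureReal_ball_le {D r : ℝ} (hD : 0 < D) (hr : D ≤ 4 * r) (c : E) :
    ENNReal.ofReal (D ^ Module.finrank ℝ E * μ.real (ball 0 4⁻¹)) ≤ μ (ball c r) := by
  rw [ofReal_mul (by positivity), ofReal_measureReal measure_ball_lt_top.ne,
    ← Measure.addHaar_ball_mul_of_pos μ c hD]
  exact measure_mono (ball_subset_ball (by linarith))

theorem edist_setAverage_ball_le {f : E → ℝ} (hf : Continuous f) {p q : ℝ} (hp : 1 ≤ p)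
    (hq : 0 ≤ q) {S : Set E} {a b : E} {ρ σ D : ℝ} (haS : ball a ρ ⊆ S) (hbS : ball b σ ⊆ S)
    (hD0 : 0 < D) (hD : dist a b + ρ + σ ≤ D) (hρ : D ≤ 4 * ρ) (hσ : D ≤ 4 * σ) :
    edist (⨍ u in ball a ρ, f u ∂μ) (⨍ v in ball b σ, f v ∂μ)
      ≤ ENNReal.ofReal (grrBallConst μ p * D ^ (q - 2 * Module.finrank ℝ E / p))
        * grrEnergy μ f p q S ^ (1 / p) := by
  set V := D ^ Module.finrank ℝ E * μ.real (ball (0 : E) 4⁻¹)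
  have hV : 0 < V := mul_pos (by positivity) measureReal_ball_quarter_pos
  have hdist : ∀ u ∈ ball a ρ, ∀ v ∈ ball b σ, dist u v ≤ D := by
    intro u hu v hv
    have := dist_triangle4 u a b v
    rw [mem_ball] at hu hv
    rw [dist_comm] at hv
    linarith
  refine (edist_setAverage_le_grrEnergy hf hp hq haS hbS measurableSet_ball measurableSet_ball
    (measure_ball_pos μ a (by linarith)).ne' measure_ball_lt_top.ne
    (measure_ball_pos μ b (by linarith)).ne' measure_ball_lt_top.ne
    (hf.integrableOn_ball a ρ) (hf.integrableOn_ball b σ) hdist).trans ?_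
  calc ENNReal.ofReal (D ^ q) * ((μ (ball a ρ) * μ (ball b σ))⁻¹ * grrEnergy μ f p q S) ^ (1 / p)
      ≤ ENNReal.ofReal (D ^ q)
          * ((ENNReal.ofReal V * ENNReal.ofReal V)⁻¹ * grrEnergy μ f p q S) ^ (1 / p) := by
        gcongr
        exacts [ofReal_pow_mul_measureReal_ball_le hD0 hρ a,
          ofReal_pow_mul_measureReal_ball_le hD0 hσ b]
    _ = ENNReal.ofReal (grrBallConst μ p * D ^ (q - 2 * Module.finrank ℝ E / p))
          * grrEnergy μ f p q S ^ (1 / p) := by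
        rw [grrBallConst_mul_rpow hD0, ← ofReal_mul hV.le, ← sq,
          ← ofReal_inv_of_pos (by positivity), mul_rpow_of_nonneg _ _ (by positivity),
          ofReal_rpow_of_nonneg (by positivity) (by positivity), ofReal_mul (by positivity),
          mul_assoc]

theorem edist_setAverage_ball_lineMap_half_le {f : E → ℝ} (hf : Continuous f) {p q : ℝ}
    (hp : 1 ≤ p) (hq : 0 ≤ q) {x s : E} (hs : s ∈ ball x 1) {θ : ℝ} (hθ0 : 0 < θ)
    (hθ1 : θ ≤ 1) :
    edist (⨍ u in ball (AffineMap.lineMap s x θ) θ, f u ∂μ)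
        (⨍ u in ball (AffineMap.lineMap s x (θ / 2)) (θ / 2), f u ∂μ)
      ≤ ENNReal.ofReal (grrBallConst μ p * (2 * θ) ^ (q - 2 * Module.finrank ℝ E / p))
        * grrEnergy μ f p q (ball x 1) ^ (1 / p) := by
  have hdist : dist (AffineMap.lineMap s x θ) (AffineMap.lineMap s x (θ / 2) : E) ≤ θ / 2 := by
    rw [dist_lineMap_lineMap, Real.dist_eq, abs_of_pos (by linarith)]
    nlinarith [mem_ball.1 hs, dist_nonneg (x := s) (y := x)]
  exact edist_setAverage_ball_le hf hp hq (ball_lineMap_subset_ball hs hθ1)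
    (ball_lineMap_subset_ball hs (by linarith)) (by linarith) (by linarith) (by linarith)
    (by linarith)

theorem edist_setAverage_ball_lineMap_le {f : E → ℝ} (hf : Continuous f) {p q : ℝ}
    (hp : 1 ≤ p) (hq : 0 ≤ q) (hα : 0 < q - 2 * Module.finrank ℝ E / p) {x s : E}
    (hs : s ∈ ball x 1) {ε : ℝ} (hε0 : 0 < ε) (hε1 : ε ≤ 1) :
    edist (⨍ u in ball (AffineMap.lineMap s x ε) ε, f u ∂μ) (f s)
      ≤ ENNReal.ofReal (grrBallConst μ p * (2 * ε) ^ (q - 2 * Module.finrank ℝ E / p)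
          * (1 - (1 / 2) ^ (q - 2 * Module.finrank ℝ E / p))⁻¹)
        * grrEnergy μ f p q (ball x 1) ^ (1 / p) := by
  set α := q - 2 * Module.finrank ℝ E / p
  set K := grrBallConst μ p * (2 * ε) ^ α
  set Φ := grrEnergy μ f p q (ball x 1) ^ (1 / p)
  set r : ℝ := (1 / 2) ^ α
  set θ : ℕ → ℝ := fun k ↦ ε * (1 / 2) ^ k
  have hθ0 : ∀ k, 0 < θ k := fun k ↦ by positivity
  have hθ1 : ∀ k, θ k ≤ 1 := fun k ↦
    (mul_le_of_le_one_right hε0.le (pow_le_one₀ (by norm_num) (by norm_num))).trans hε1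
  have hK : 0 ≤ K := by have := grrBallConst_pos μ p; positivity
  have hr0 : 0 ≤ r := by positivity
  have hr1 : r < 1 := Real.rpow_lt_one (by norm_num) (by norm_num) hα
  have hstep : ∀ k, edist (⨍ u in ball (AffineMap.lineMap s x (θ k)) (θ k), f u ∂μ)
      (⨍ u in ball (AffineMap.lineMap s x (θ (k + 1))) (θ (k + 1)), f u ∂μ)
        ≤ ENNReal.ofReal (K * r ^ k) * Φ := by
    intro k
    have hpow : (2 * θ k) ^ α = (2 * ε) ^ α * r ^ k := by
      simp only [θ, r, ← mul_assoc, Real.mul_rpow (by positivity : (0 : ℝ) ≤ 2 * ε)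
        (by positivity : (0 : ℝ) ≤ (1 / 2) ^ k), Real.rpow_pow_comm (by norm_num : (0 : ℝ) ≤ 1 / 2)]
    rw [show θ (k + 1) = θ k / 2 by simp only [θ, pow_succ]; ring,
      show K * r ^ k = grrBallConst μ p * (2 * θ k) ^ α by rw [hpow, mul_assoc]]
    exact edist_setAverage_ball_lineMap_half_le hf hp hq hs (hθ0 k) (hθ1 k)
  have hθlim : Tendsto θ atTop (𝓝 0) := by
    simpa [θ] using (tendsto_pow_atTop_nhds_zero_of_lt_one (by norm_num : (0 : ℝ) ≤ 1 / 2)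
      (by norm_num)).const_mul ε
  have hlim : Tendsto (fun k ↦ ⨍ u in ball (AffineMap.lineMap s x (θ k)) (θ k), f u ∂μ) atTop
      (𝓝 (f s)) :=
    hf.continuousAt.tendsto_setAverage (tendsto_ball_lineMap_smallSets s x hθlim)
      (fun k ↦ (measure_ball_pos μ _ (hθ0 k)).ne') (fun _ ↦ measure_ball_lt_top.ne)
      (fun _ ↦ measurableSet_ball) (fun _ ↦ hf.integrableOn_ball _ _)
  have hsum : ∑' k, ENNReal.ofReal (K * r ^ k) * Φ = ENNReal.ofReal (K * (1 - r)⁻¹) * Φ := by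
    rw [ENNReal.tsum_mul_right, ← ENNReal.ofReal_tsum_of_nonneg (fun k ↦ by positivity)
      ((summable_geometric_of_lt_one hr0 hr1).mul_left K), tsum_mul_left,
      tsum_geometric_of_lt_one hr0 hr1]
  simpa [θ, hsum] using edist_le_tsum_of_edist_le_of_tendsto₀ _ hstep hlim

theorem edist_setAverage_ball_lineMap_lineMap_le {f : E → ℝ} (hf : Continuous f) {p q : ℝ}
    (hp : 1 ≤ p) (hq : 0 ≤ q) {x s t : E} (hs : s ∈ ball x 1) (ht : t ∈ ball x 1) {ε : ℝ}
    (hε0 : 0 < ε) (hε1 : ε ≤ 1) (hst : dist s t ≤ 2 * ε) :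
    edist (⨍ u in ball (AffineMap.lineMap s x ε) ε, f u ∂μ)
        (⨍ u in ball (AffineMap.lineMap t x ε) ε, f u ∂μ)
      ≤ ENNReal.ofReal (grrBallConst μ p * (4 * ε) ^ (q - 2 * Module.finrank ℝ E / p))
        * grrEnergy μ f p q (ball x 1) ^ (1 / p) := by
  have hdist : dist (AffineMap.lineMap s x ε) (AffineMap.lineMap t x ε : E)
      = (1 - ε) * dist s t := by
    rw [dist_eq_norm, AffineMap.lineMap_apply_module, AffineMap.lineMap_apply_module,
      show (1 - ε) • s + ε • x - ((1 - ε) • t + ε • x) = (1 - ε) • (s - t) by module,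
      norm_smul, Real.norm_of_nonneg (by linarith), ← dist_eq_norm]
  exact edist_setAverage_ball_le hf hp hq (ball_lineMap_subset_ball hs hε1)
    (ball_lineMap_subset_ball ht hε1) (by linarith) (by nlinarith [dist_nonneg (x := s) (y := t)])
    (by linarith) (by linarith)

theorem edist_le_grrConst_mul_grrEnergy {f : E → ℝ} (hf : Continuous f) {p q : ℝ}
    (hp : 1 ≤ p) (hq : 0 ≤ q) (hα : 0 < q - 2 * Module.finrank ℝ E / p) {x s t : E}
    (hs : s ∈ ball x 1) (ht : t ∈ ball x 1) :
    edist (f t) (f s)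
      ≤ ENNReal.ofReal (grrConst μ p q * dist t s ^ (q - 2 * Module.finrank ℝ E / p))
        * grrEnergy μ f p q (ball x 1) ^ (1 / p) := by
  rcases eq_or_ne t s with rfl | hts
  · simp
  set α := q - 2 * Module.finrank ℝ E / p
  set M := grrBallConst μ p
  set G := (1 - (1 / 2 : ℝ) ^ α)⁻¹
  set Φ := grrEnergy μ f p q (ball x 1) ^ (1 / p)
  set r := dist t s
  have hr0 : 0 < r := dist_pos.2 hts
  have hr2 : r < 2 := by
    have := dist_triangle_right t s x
    rw [mem_ball] at hs ht
    linarith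
  set ε := r / 2 with hε
  set a := ⨍ u in ball (AffineMap.lineMap s x ε) ε, f u ∂μ
  set b := ⨍ u in ball (AffineMap.lineMap t x ε) ε, f u ∂μ
  have hM : 0 ≤ M := (grrBallConst_pos μ p).le
  have hG : 0 ≤ G :=
    inv_nonneg.2 (sub_nonneg.2 (Real.rpow_le_one (by norm_num) (by norm_num) hα.le))
  have hbridge : edist b a ≤ ENNReal.ofReal (M * (2 * r) ^ α) * Φ := by
    rw [show 2 * r = 4 * ε by ring]
    exact edist_setAverage_ball_lineMap_lineMap_le hf hp hq ht hs (by positivity) (by linarith)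
      (by linarith)
  have hchain := fun {y : E} (hy : y ∈ ball x 1) ↦
    edist_setAverage_ball_lineMap_le (μ := μ) hf hp hq hα hy (ε := ε) (by positivity)
      (by linarith)
  rw [show 2 * ε = r by ring] at hchain
  calc edist (f t) (f s) ≤ edist (f t) b + edist b a + edist a (f s) := edist_triangle4 _ _ _ _
    _ ≤ ENNReal.ofReal (M * r ^ α * G) * Φ + ENNReal.ofReal (M * (2 * r) ^ α) * Φ
        + ENNReal.ofReal (M * r ^ α * G) * Φ := by
        gcongr
        · rw [edist_comm]
          exact hchain ht
        · exact hchain hs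
    _ = ENNReal.ofReal (grrConst μ p q * r ^ α) * Φ := by
        rw [← add_mul, ← add_mul, ← ofReal_add (by positivity) (by positivity),
          ← ofReal_add (by positivity) (by positivity), Real.mul_rpow (by norm_num) hr0.le,
          show grrConst μ p q = M * (2 * G + 2 ^ α) from rfl]
        ring_nf

end HaarBalls

theorem garsia_rodemich_rumsey_polynomial
    (d : ℕ) (p q : ℝ) (hp : 1 ≤ p) (hq : 0 < q) (hpq : 2 * d < p * q) :
    ∃ C : ℝ, 0 < C ∧
      ∀ f : EuclideanSpace ℝ (Fin d) → ℝ, Continuous f →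
      ∀ x s t : EuclideanSpace ℝ (Fin d), s ∈ Metric.ball x 1 → t ∈ Metric.ball x 1 →
        ENNReal.ofReal (|f t - f s|)
          ≤ ENNReal.ofReal (C * dist t s ^ (q - 2 * d / p)) *
            (∫⁻ uv in (Metric.ball x 1) ×ˢ (Metric.ball x 1),
                ENNReal.ofReal ((|f uv.1 - f uv.2| / dist uv.1 uv.2 ^ q) ^ p)) ^ (1 / p) := by
  have hα : 0 < q - 2 * Module.finrank ℝ (EuclideanSpace ℝ (Fin d)) / p := by
    rw [finrank_euclideanSpace_fin, sub_pos, div_lt_iff₀ (by linarith)]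
    linarith
  refine ⟨grrConst volume p q, grrConst_pos hα, fun f hf x s t hs ht ↦ ?_⟩
  have h := edist_le_grrConst_mul_grrEnergy (μ := volume) hf hp hq.le hα hs ht
  rw [finrank_euclideanSpace_fin, edist_dist, Real.dist_eq] at h
  exact h

end
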